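/- Let n be a natural number and j : Fin (n+1). Let σⱼ : Fin (n+2) → Fin (n+1) be the monotone surjection defined by σⱼ k = k if (k : ℕ) ≤ (j : ℕ) and σⱼ k = k − 1 otherwise (the underlying map of the degeneracy map σ j of the simplex category), and let δ_{j+1} : Fin (n+2) → Fin (n+3) be the monotone injection whose image omits j.succ (i.e., Fin.succAbove j.succ, the underlying map of the face map δ (j+1)). Then E σⱼ = δ_{j+1}. (The paper's functor e : Δᵒᵖ → Δ sends degeneracy maps to inner face maps.) -/
import Mathlib


/-- The décalage-like shift of a map `f : Fin n → Fin m`: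
`(E f) i` is the number of indices `k : Fin n` with `(f k : ℕ) < (i : ℕ)`. -/
def E {n m : ℕ} (f : Fin n → Fin m) : Fin (m + 1) → Fin (n + 1) :=
  fun i =>
    ⟨(Finset.univ.filter (fun k : Fin n => (f k : ℕ) < (i : ℕ))).card,
      Nat.lt_succ_of_le ((Finset.card_filter_le _ _).trans (by simp))⟩

/-- The underlying map of the degeneracy `σⱼ : [n+1] → [n]` of the simplex category:
`σⱼ k = k` if `k ≤ j` and `σⱼ k = k - 1` otherwise. -/
def sigmaMap {n : ℕ} (j : Fin (n + 1)) : Fin (n + 2) → Fin (n + 1) :=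
  fun k =>
    if h : (k : ℕ) ≤ (j : ℕ) then ⟨(k : ℕ), by have := j.isLt; omega⟩
    else ⟨(k : ℕ) - 1, by have := k.isLt; omega⟩

lemma card_filter_val_lt {N b : ℕ} :
    (Finset.univ.filter (fun k : Fin N => (k : ℕ) < b)).card = min b N := by
  have : (Finset.univ.filter (fun k : Fin N => (k : ℕ) < b)) =
      (Finset.range (min b N)).attachFin (by intro m hm; simp at hm; omega) := by
    ext k
    simp only [Finset.mem_filter, Finset.mem_univ, true_and, Finset.mem_attachFin,
      Finset.mem_range]
    omega
  rw [this, Finset.card_attachFin, Finset.card_range]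

theorem stmt6 {n : ℕ} (j : Fin (n + 1)) :
    E (sigmaMap j) = Fin.succAbove (j.succ.castSucc) := by
  funext i
  apply Fin.ext
  have hval : ((Fin.succAbove (j.succ.castSucc)) i : ℕ) =
      if (i : ℕ) ≤ (j : ℕ) then (i : ℕ) else (i : ℕ) + 1 := by
    by_cases h : (i : ℕ) ≤ (j : ℕ)
    · rw [Fin.succAbove_of_castSucc_lt _ _ (by
        simp only [Fin.lt_def, Fin.coe_castSucc, Fin.val_succ]; omega)]
      simp [h]
    · rw [Fin.succAbove_of_le_castSucc _ _ (by
        simp only [Fin.le_def, Fin.coe_castSucc, Fin.val_succ]; omega)]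
      simp [h]
  rw [hval]
  show (Finset.univ.filter (fun k : Fin (n + 2) => ((sigmaMap j k) : ℕ) < (i : ℕ))).card = _
  set b : ℕ := if (i : ℕ) ≤ (j : ℕ) then (i : ℕ) else (i : ℕ) + 1 with hb
  have hcond : ∀ k : Fin (n + 2), (((sigmaMap j k) : ℕ) < (i : ℕ)) ↔ ((k : ℕ) < b) := by
    intro k
    unfold sigmaMap
    have hi := i.isLt
    have hk := k.isLt
    have hj := j.isLt
    by_cases h : (k : ℕ) ≤ (j : ℕ) <;> simp [h, hb] <;> split <;> omega
  simp only [hcond]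
  rw [card_filter_val_lt]
  have := i.isLt
  have := j.isLt
  omega
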